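/- Let β: P → G be a surjective group homomorphism with P finitely generated and G finitely presented, and suppose β is 2-connected on R-homology (isomorphism on H_1(-;R), surjection on H_2(-;R)). Then the kernel N of β is an R-invisible subgroup of P: N is normally finitely generated in P and (N/[P,N]) ⊗_Z R = 0. -/

import Mathlib

open scoped TensorProduct

/-- The set of denominators of (reduced fractional expressions of) elements of `R ⊆ ℚ`. -/
def DR (R : Subring ℚ) : Set ℕ := {d | ∃ q ∈ R, q.den = d}

variable {G H A : Type*} [Group G] [Group H] [Group A]

/-- Evaluation of a monomial over `G` in `n` indeterminates at a tuple of elements of `G`. -/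
noncomputable def evalWord {n : ℕ} (g : Fin n → G) :
    Monoid.Coprod G (FreeGroup (Fin n)) →* G :=
  Monoid.Coprod.lift (MonoidHom.id G) (FreeGroup.lift g)

/-- The projection `G * F → F → F/[F,F]`. -/
noncomputable def toFreeAb (G : Type*) [Group G] (n : ℕ) :
    Monoid.Coprod G (FreeGroup (Fin n)) →* Abelianization (FreeGroup (Fin n)) :=
  Monoid.Coprod.lift 1 Abelianization.of

/-- An `R`-nullhomologous system of equations `xᵢ^e = wᵢ(x₁,…,xₙ)` over `G`. -/
structure NullSys (R : Subring ℚ) (G : Type*) [Group G] where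
  n : ℕ
  e : ℕ
  he : e ∈ DR R
  w : Fin n → Monoid.Coprod G (FreeGroup (Fin n))
  nullh : ∀ i, toFreeAb G n (w i) = 1

/-- A solution of a system of equations over `G`. -/
def NullSys.IsSolution {R : Subring ℚ} (S : NullSys R G) (g : Fin S.n → G) : Prop :=
  ∀ i, (g i) ^ S.e = evalWord g (S.w i)

/-- A group is `R`-closed if every `R`-nullhomologous system over it has a unique solution. -/
def IsRClosed (R : Subring ℚ) (A : Type*) [Group A] : Prop :=
  ∀ S : NullSys R A, ∃! g : Fin S.n → A, S.IsSolution g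

/-- A normal subgroup `N ≤ G` is `R`-invisible if it is normally finitely generated and every
element of `N/[G,N]` has (finite) order lying in `D_R`. -/
def IsRInvisible (R : Subring ℚ) {G : Type*} [Group G] (N : Subgroup G) : Prop :=
  N.Normal ∧
  (∃ s : Finset G, ↑s ⊆ (N : Set G) ∧ Subgroup.normalClosure ↑s = N) ∧
  ∀ x ∈ N, ∃ e ∈ DR R, x ^ e ∈ ⁅(⊤ : Subgroup G), N⁆
/-- `H₁(G;R) = H₁(G;ℤ) ⊗ R`, via the abelianization. -/
abbrev H1R (R : Subring ℚ) (G : Type*) [Group G] : Type _ :=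
  Additive (Abelianization G) ⊗[ℤ] R

/-- The map induced on `H₁(-;R)` by a group homomorphism. -/
noncomputable def H1Rmap (R : Subring ℚ) {G H : Type*} [Group G] [Group H] (φ : G →* H) :
    H1R R G →ₗ[ℤ] H1R R H :=
  TensorProduct.map (MonoidHom.toAdditive (Abelianization.map φ)).toIntLinearMap LinearMap.id

section Hopf

variable (G : Type*) [Group G]

/-- The canonical free presentation of `G`. -/
noncomputable def presHom : FreeGroup G →* G := FreeGroup.lift id

/-- The relation subgroup of the canonical free presentation of `G`. -/
noncomputable def relSub : Subgroup (FreeGroup G) := (presHom G).ker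

/-- The numerator `ker π ⊓ [F,F]` of the Hopf formula for `H₂(G)`. -/
noncomputable def hopfTop : Subgroup (FreeGroup G) :=
  relSub G ⊓ ⁅(⊤ : Subgroup (FreeGroup G)), (⊤ : Subgroup (FreeGroup G))⁆

/-- The denominator `[F, ker π]` of the Hopf formula for `H₂(G)`. -/
noncomputable def hopfBot : Subgroup (FreeGroup G) :=
  ⁅(⊤ : Subgroup (FreeGroup G)), relSub G⁆

noncomputable instance relSub_normal : (relSub G).Normal := MonoidHom.normal_ker _

noncomputable instance hopfBot_normal : (hopfBot G).Normal := Subgroup.commutator_normal _ _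

noncomputable instance hopfBot_subgroupOf_normal :
    ((hopfBot G).subgroupOf (hopfTop G)).Normal := Subgroup.normal_subgroupOf

/-- `H₂(G;ℤ)` via the Hopf formula `(ker π ⊓ [F,F])/[F, ker π]` for the canonical free
presentation `π : F(G) → G`. -/
abbrev H2Z : Type _ :=
  ↥(hopfTop G) ⧸ ((hopfBot G).subgroupOf (hopfTop G))

open scoped commutatorElement in
noncomputable instance H2ZCommGroup : CommGroup (H2Z G) :=
  { (inferInstance : Group (H2Z G)) with
    mul_comm := by
      intro a b
      induction a using QuotientGroup.induction_on with
      | H x =>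
      induction b using QuotientGroup.induction_on with
      | H y =>
      rw [← QuotientGroup.mk_mul, ← QuotientGroup.mk_mul, QuotientGroup.eq]
      rw [Subgroup.mem_subgroupOf]
      have : (((x * y)⁻¹ * (y * x) : ↥(hopfTop G)) : FreeGroup G)
          = ⁅((y : FreeGroup G))⁻¹, ((x : FreeGroup G))⁻¹⁆ := by
        simp [commutatorElement_def, mul_assoc]
      rw [this]
      exact Subgroup.commutator_mem_commutator (Subgroup.mem_top _)
        ((relSub G).inv_mem (Subgroup.mem_inf.mp x.2).1) }

variable {G} {H : Type*} [Group H]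

theorem presHom_naturality (φ : G →* H) (x : FreeGroup G) :
    presHom H (FreeGroup.map φ x) = φ (presHom G x) := by
  have : (presHom H).comp (FreeGroup.map φ) = φ.comp (presHom G) := by
    apply FreeGroup.ext_hom
    intro a
    simp [presHom]
  exact DFunLike.congr_fun this x

theorem map_mem_hopfTop (φ : G →* H) {x : FreeGroup G} (hx : x ∈ hopfTop G) :
    FreeGroup.map φ x ∈ hopfTop H := by
  rcases Subgroup.mem_inf.mp hx with ⟨h1, h2⟩
  refine Subgroup.mem_inf.mpr ⟨?_, ?_⟩
  · simp only [relSub, MonoidHom.mem_ker] at h1 ⊢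
    rw [presHom_naturality, h1, map_one]
  · have := Subgroup.mem_map_of_mem (FreeGroup.map φ) h2
    rw [Subgroup.map_commutator] at this
    exact Subgroup.commutator_mono le_top le_top this

theorem map_mem_hopfBot (φ : G →* H) {x : FreeGroup G} (hx : x ∈ hopfBot G) :
    FreeGroup.map φ x ∈ hopfBot H := by
  have := Subgroup.mem_map_of_mem (FreeGroup.map φ) hx
  rw [hopfBot, Subgroup.map_commutator] at this
  refine Subgroup.commutator_mono le_top ?_ this
  rintro y ⟨z, hz, rfl⟩
  simp only [relSub, MonoidHom.mem_ker] at hz ⊢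
  rw [presHom_naturality, hz, map_one]

/-- The map induced on `H₂(-;ℤ)` (Hopf formula) by a group homomorphism. -/
noncomputable def H2Zmap (φ : G →* H) : H2Z G →* H2Z H :=
  QuotientGroup.map _ _
    (MonoidHom.codRestrict ((FreeGroup.map φ).domRestrict (hopfTop G)) (hopfTop H)
      fun x => map_mem_hopfTop φ x.2)
    (by
      intro x hx
      rw [Subgroup.mem_subgroupOf] at hx
      rw [Subgroup.mem_comap, Subgroup.mem_subgroupOf]
      exact map_mem_hopfBot φ hx)

/-- The map induced on `H₂(-;R) = H₂(-;ℤ) ⊗ R` by a group homomorphism. -/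
noncomputable def H2Rmap (R : Subring ℚ) (φ : G →* H) :
    (Additive (H2Z G) ⊗[ℤ] R) →ₗ[ℤ] (Additive (H2Z H) ⊗[ℤ] R) :=
  TensorProduct.map (MonoidHom.toAdditive (H2Zmap φ)).toIntLinearMap LinearMap.id

end Hopf

/-- A homomorphism is 2-connected on `R`-homology if it induces an isomorphism on `H₁(-;R)`
and a surjection on `H₂(-;R)`. -/
def TwoConnected (R : Subring ℚ) {G H : Type*} [Group G] [Group H] (φ : G →* H) : Prop :=
  Function.Bijective (H1Rmap R φ) ∧ Function.Surjective (H2Rmap R φ)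

/-- A group is finitely presented if it is presented by finitely many generators and
relations. -/
def FinitelyPresentedGroup (G : Type*) [Group G] : Prop :=
  ∃ (n : ℕ) (rels : Finset (FreeGroup (Fin n))),
    Nonempty (G ≃* PresentedGroup (rels : Set (FreeGroup (Fin n))))

/-- The class `Ω^R`: homomorphisms of finitely generated groups into finitely presented groups
which are 2-connected on `R`-homology. -/
def MemOmega (R : Subring ℚ) {P G : Type*} [Group P] [Group G] (α : P →* G) : Prop :=
  Group.FG P ∧ FinitelyPresentedGroup G ∧ TwoConnected R α

/-- The quotient `N/[G,N]` of a normal subgroup `N ≤ G`. -/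
abbrev commQuot {G : Type*} [Group G] (N : Subgroup G) [N.Normal] : Type _ :=
  ↥N ⧸ ((⁅(⊤ : Subgroup G), N⁆).subgroupOf N)

open scoped commutatorElement in
noncomputable instance commQuotCommGroup {G : Type*} [Group G] (N : Subgroup G) [N.Normal] :
    CommGroup (commQuot N) :=
  { (inferInstance : Group (commQuot N)) with
    mul_comm := by
      intro a b
      induction a using QuotientGroup.induction_on with
      | H x =>
      induction b using QuotientGroup.induction_on with
      | H y =>
      rw [← QuotientGroup.mk_mul, ← QuotientGroup.mk_mul, QuotientGroup.eq]
      rw [Subgroup.mem_subgroupOf]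
      have : (((x * y)⁻¹ * (y * x) : ↥N) : G) = ⁅((y : G))⁻¹, ((x : G))⁻¹⁆ := by
        simp [commutatorElement_def, mul_assoc]
      rw [this]
      exact Subgroup.commutator_mem_commutator (Subgroup.mem_top _) (N.inv_mem x.2) }

/-!
`N = ker β` is normally finitely generated by Tietze's argument: the relators of a finite
presentation of `G`, lifted to `P`, together with the corrections `w⁻¹ p`, where `p` runs over a
finite generating set of `P` and `w` is a lifted word with `β w = β p`, normally generate `N`.

For the second part, `R ⊆ ℚ` is flat over `ℤ`, so tensoring the Stallings sequence
`H₂(P) → H₂(G) → N/[P,N] → H₁(P) → H₁(G)` with `R` keeps it exact at `N/[P,N]`. Injectivity on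
`H₁(-;R)` forces `N/[P,N] ⊗ R → H₁(P;R)` to vanish, so `H₂(G;R)` maps onto `N/[P,N] ⊗ R`; since
`H₂(P;R)` maps onto `H₂(G;R)` and the composite vanishes, `N/[P,N] ⊗ R = 0`.
-/

open scoped commutatorElement

section Development

variable {P : Type*} [Group P]

theorem ker_le_of_comp_eq_mk' {β : P →* G} {M : Subgroup P} [M.Normal] {ψ : G →* P ⧸ M}
    (h : ψ.comp β = QuotientGroup.mk' M) : β.ker ≤ M := by
  intro x hx
  rw [← QuotientGroup.ker_mk' M, ← h, MonoidHom.mem_ker, MonoidHom.comp_apply, hx, map_one]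

theorem isFinitelyNormallyGenerated_ker_of_presentedGroup {α : Type*}
    {rels : Set (FreeGroup α)} (hrels : rels.Finite) {β : P →* PresentedGroup rels}
    (hβ : Function.Surjective β) (hP : Group.FG P) : β.ker.IsFinitelyNormallyGenerated := by
  obtain ⟨S, hS⟩ := hP.out
  let φ : FreeGroup α →* P := FreeGroup.lift fun a => Function.surjInv hβ (PresentedGroup.of a)
  have hβφ : β.comp φ = PresentedGroup.mk rels := by
    ext a
    simp [φ, Function.surjInv_eq hβ, PresentedGroup.of]
  let w := Function.surjInv (PresentedGroup.mk_surjective rels)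
  let T : Set P := φ '' rels ∪ (fun p => (φ (w (β p)))⁻¹ * p) '' S
  have hT : T ⊆ β.ker := by
    rintro _ (⟨r, hr, rfl⟩ | ⟨p, -, rfl⟩)
    · change β (φ r) = 1
      rw [← MonoidHom.comp_apply, hβφ]
      exact (QuotientGroup.eq_one_iff r).mpr (Subgroup.subset_normalClosure hr)
    · change β ((φ (w (β p)))⁻¹ * p) = 1
      rw [map_mul, map_inv, ← MonoidHom.comp_apply, hβφ,
        Function.surjInv_eq (f := PresentedGroup.mk rels), inv_mul_cancel]
  let M := Subgroup.normalClosure T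
  let ψ : PresentedGroup rels →* P ⧸ M :=
    QuotientGroup.lift _ ((QuotientGroup.mk' M).comp φ) <| Subgroup.normalClosure_le_normal
      fun r hr => (QuotientGroup.eq_one_iff _).mpr
        (Subgroup.subset_normalClosure (.inl ⟨r, hr, rfl⟩))
  have hψ : ψ.comp β = QuotientGroup.mk' M := by
    refine MonoidHom.eq_of_eqOn_dense hS fun p hp => ?_
    change ψ (β p) = QuotientGroup.mk p
    rw [← Function.surjInv_eq (PresentedGroup.mk_surjective rels) (β p)]
    exact QuotientGroup.eq.mpr (Subgroup.subset_normalClosure (.inr ⟨p, hp, rfl⟩))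
  refine ⟨T, (hrels.image φ).union (S.finite_toSet.image _), ?_⟩
  exact le_antisymm (Subgroup.normalClosure_le_normal hT) (ker_le_of_comp_eq_mk' hψ)

theorem isFinitelyNormallyGenerated_ker {β : P →* G}
    (hβ : Function.Surjective β) (hP : Group.FG P) (hG : FinitelyPresentedGroup G) :
    β.ker.IsFinitelyNormallyGenerated := by
  obtain ⟨n, rels, ⟨e⟩⟩ := hG
  have := isFinitelyNormallyGenerated_ker_of_presentedGroup rels.finite_toSet
    (β := (e : G →* _).comp β) (e.surjective.comp hβ) hP
  rwa [MonoidHom.ker_mulEquiv_comp] at this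

theorem Subgroup.IsFinitelyNormallyGenerated.exists_finset {N : Subgroup G}
    (h : N.IsFinitelyNormallyGenerated) :
    ∃ s : Finset G, ↑s ⊆ (N : Set G) ∧ Subgroup.normalClosure ↑s = N := by
  obtain ⟨S, hS, rfl⟩ := h
  refine ⟨hS.toFinset, ?_, ?_⟩ <;> rw [hS.coe_toFinset]
  exact Subgroup.subset_normalClosure

theorem commute_mk_of_mem {N : Subgroup P} [N.Normal] {n : P} (hn : n ∈ N) (p : P) :
    Commute (n : P ⧸ ⁅(⊤ : Subgroup P), N⁆) p := by
  refine QuotientGroup.eq.mpr ?_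
  rw [show (n * p)⁻¹ * (p * n) = ⁅p⁻¹, n⁻¹⁆ by group]
  exact Subgroup.commutator_mem_commutator (Subgroup.mem_top _) (inv_mem hn)

theorem mk_eq_mk_of_mem_commutator {K : Type*} [Group K] {β : P →* G} {φ ψ : K →* P}
    (h : β.comp φ = β.comp ψ) {k : K} (hk : k ∈ commutator K) :
    (φ k : P ⧸ ⁅(⊤ : Subgroup P), β.ker⁆) = ψ k := by
  have hN : ∀ k, φ k * (ψ k)⁻¹ ∈ β.ker := fun k => by
    rw [MonoidHom.mem_ker, map_mul, map_inv, ← MonoidHom.comp_apply, h, MonoidHom.comp_apply,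
      mul_inv_cancel]
  let Φ : K →* P ⧸ ⁅(⊤ : Subgroup P), β.ker⁆ :=
    MonoidHom.mk' (fun k => (φ k : P ⧸ ⁅(⊤ : Subgroup P), β.ker⁆) * (ψ k : P ⧸ _)⁻¹) fun k l => by
      have hc := (commute_mk_of_mem (hN l) (ψ k)⁻¹).eq
      simp only [map_mul, QuotientGroup.mk_mul, QuotientGroup.mk_inv, mul_inv_rev,
        mul_assoc] at hc ⊢
      rw [hc]
  have : k ∈ Φ.ker := by
    refine (Subgroup.commutator_le.mpr fun a _ b _ => ?_) hk
    rw [MonoidHom.mem_ker, map_commutatorElement]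
    exact (commute_mk_of_mem (hN a) _).commutator_eq
  exact mul_inv_eq_one.mp this

theorem map_mem_commutator (f : G →* H) {x : G} (hx : x ∈ commutator G) :
    f x ∈ commutator H := by
  have hx' : Abelianization.of x = 1 := by rwa [← MonoidHom.mem_ker, Abelianization.ker_of]
  rw [← Abelianization.ker_of, MonoidHom.mem_ker, ← Abelianization.map_of, hx', map_one]

theorem exists_mem_commutator_of_surjective {f : G →* H} (hf : Function.Surjective f) {y : H}
    (hy : y ∈ commutator H) : ∃ x ∈ commutator G, f x = y := by
  have : (commutator G).map f = commutator H := by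
    rw [map_commutator_eq, f.range_eq_top.mpr hf]
    rfl
  rw [← this] at hy
  exact hy

noncomputable def commQuotToAbelianization (N : Subgroup P) [N.Normal] :
    commQuot N →* Abelianization P :=
  QuotientGroup.lift _ (Abelianization.of.comp N.subtype) fun n hn => by
    rw [MonoidHom.mem_ker, MonoidHom.comp_apply, ← MonoidHom.mem_ker, Abelianization.ker_of]
    exact Subgroup.commutator_mono le_top le_top hn

section Connecting

variable {β : P →* G} {σ : FreeGroup G →* P}

theorem map_hopfBot_le (hσ : β.comp σ = presHom G) :
    (hopfBot G).map σ ≤ ⁅(⊤ : Subgroup P), β.ker⁆ := by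
  rw [hopfBot, Subgroup.map_commutator]
  refine Subgroup.commutator_mono le_top (Subgroup.map_le_iff_le_comap.mpr fun r hr => ?_)
  rw [Subgroup.mem_comap, MonoidHom.mem_ker, ← MonoidHom.comp_apply, hσ]
  exact hr

variable (β σ) in
/-- The connecting map `H₂(G) → N/[P,N]` of the Stallings exact sequence. -/
noncomputable def connectingHom (hσ : β.comp σ = presHom G) : H2Z G →* commQuot β.ker :=
  QuotientGroup.map _ _
    ((σ.comp (hopfTop G).subtype).codRestrict β.ker fun r => by
      rw [MonoidHom.mem_ker, MonoidHom.comp_apply, ← MonoidHom.comp_apply β, hσ]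
      exact (Subgroup.mem_inf.mp r.2).1)
    fun r hr => map_hopfBot_le hσ ⟨r, hr, rfl⟩

theorem comp_comp_map_eq_comp_presHom (hσ : β.comp σ = presHom G) :
    β.comp (σ.comp (FreeGroup.map β)) = β.comp (presHom P) := by
  rw [← MonoidHom.comp_assoc, hσ]
  ext p
  simp [presHom]

theorem commQuotToAbelianization_comp_connectingHom (hσ : β.comp σ = presHom G) :
    (commQuotToAbelianization β.ker).comp (connectingHom β σ hσ) = 1 := by
  refine QuotientGroup.monoidHom_ext _ (MonoidHom.ext fun r => ?_)
  change Abelianization.of (σ r) = 1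
  rw [← MonoidHom.mem_ker, Abelianization.ker_of]
  exact map_mem_commutator σ (Subgroup.mem_inf.mp r.2).2

theorem ker_commQuotToAbelianization_le_range_connectingHom (hσ : β.comp σ = presHom G) :
    (commQuotToAbelianization β.ker).ker ≤ (connectingHom β σ hσ).range := by
  intro c hc
  induction c using QuotientGroup.induction_on with
  | H n =>
  have hn : (n : P) ∈ commutator P := by
    rw [← Abelianization.ker_of]
    exact hc
  obtain ⟨f, hf, hfn⟩ := exists_mem_commutator_of_surjective
    (fun p => ⟨FreeGroup.of p, by simp [presHom]⟩ : Function.Surjective (presHom P)) hn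
  have hr : FreeGroup.map β f ∈ hopfTop G := by
    refine Subgroup.mem_inf.mpr ⟨?_, map_mem_commutator _ hf⟩
    change presHom G (FreeGroup.map β f) = 1
    rw [presHom_naturality, hfn, n.2]
  refine ⟨QuotientGroup.mk ⟨_, hr⟩, QuotientGroup.eq.mpr ?_⟩
  rw [Subgroup.mem_subgroupOf]
  refine QuotientGroup.eq.mp ?_
  change ((σ.comp (FreeGroup.map β) f : P) : P ⧸ ⁅(⊤ : Subgroup P), β.ker⁆) = (n : P)
  rw [mk_eq_mk_of_mem_commutator (comp_comp_map_eq_comp_presHom hσ) hf, hfn]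

theorem connectingHom_comp_H2Zmap (hσ : β.comp σ = presHom G) :
    (connectingHom β σ hσ).comp (H2Zmap β) = 1 := by
  refine QuotientGroup.monoidHom_ext _ (MonoidHom.ext fun r => ?_)
  refine (QuotientGroup.eq_one_iff _).mpr ?_
  rw [Subgroup.mem_subgroupOf]
  refine (QuotientGroup.eq_one_iff (N := ⁅(⊤ : Subgroup P), β.ker⁆) _).mp ?_
  change ((σ.comp (FreeGroup.map β) r : P) : P ⧸ ⁅(⊤ : Subgroup P), β.ker⁆) = 1
  rw [mk_eq_mk_of_mem_commutator (comp_comp_map_eq_comp_presHom hσ) (Subgroup.mem_inf.mp r.2).2,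
    MonoidHom.mem_ker.mp (Subgroup.mem_inf.mp r.2).1, QuotientGroup.mk_one]

theorem abelianizationMap_comp_commQuotToAbelianization :
    (Abelianization.map β).comp (commQuotToAbelianization β.ker) = 1 := by
  refine QuotientGroup.monoidHom_ext _ (MonoidHom.ext fun n => ?_)
  change Abelianization.of (β n) = 1
  rw [n.2, map_one]

end Connecting

theorem subsingleton_of_exact_of_surjective_of_injective {S A₂ B₂ C A₁ B₁ : Type*} [Semiring S]
    [AddCommMonoid A₂] [AddCommMonoid B₂] [AddCommMonoid C] [AddCommMonoid A₁] [AddCommMonoid B₁]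
    [Module S A₂] [Module S B₂] [Module S C] [Module S A₁] [Module S B₁]
    {a : A₂ →ₗ[S] B₂} {d : B₂ →ₗ[S] C} {i : C →ₗ[S] A₁} {b : A₁ →ₗ[S] B₁}
    (ha : Function.Surjective a) (hda : ∀ x, d (a x) = 0) (hdi : Function.Exact d i)
    (hbi : ∀ c, b (i c) = 0) (hb : Function.Injective b) : Subsingleton C := by
  refine subsingleton_of_forall_eq 0 fun c => ?_
  obtain ⟨y, rfl⟩ := (hdi c).mp (hb (by rw [hbi, map_zero]))
  obtain ⟨x, rfl⟩ := ha y
  exact hda x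

section Tensor

open MonoidHom

variable {A B C : Type*} [CommGroup A] [CommGroup B] [CommGroup C] (M : Type*) [AddCommGroup M]

theorem MonoidHom.rTensor_toAdditive_comp_eq_zero {f : A →* B} {g : B →* C}
    (h : g.comp f = 1) (x : Additive A ⊗[ℤ] M) :
    (toAdditive g).toIntLinearMap.rTensor M ((toAdditive f).toIntLinearMap.rTensor M x) = 0 := by
  have h' : (toAdditive g).toIntLinearMap ∘ₗ (toAdditive f).toIntLinearMap = 0 := by
    ext a
    exact congrArg Additive.ofMul (DFunLike.congr_fun h a.toMul)
  calc _ = ((toAdditive g).toIntLinearMap ∘ₗ (toAdditive f).toIntLinearMap).rTensor M x :=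
        (LinearMap.rTensor_comp_apply M _ _ x).symm
    _ = 0 := by rw [h', LinearMap.rTensor_zero, LinearMap.zero_apply]

theorem Function.MulExact.rTensor [Module.Flat ℤ M] {f : A →* B} {g : B →* C}
    (h : Function.MulExact f g) :
    Function.Exact ((toAdditive f).toIntLinearMap.rTensor M)
      ((toAdditive g).toIntLinearMap.rTensor M) :=
  Module.Flat.rTensor_exact M h

end Tensor

end Development

/-- If `β : P → G` is a surjection of a finitely generated group onto a finitely presented
group which is 2-connected on `R`-homology, then `N = ker β` is `R`-invisible: it is normally
finitely generated and `(N/[P,N]) ⊗_ℤ R = 0`. -/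
theorem ker_of_twoConnected_surjection_rInvisible (R : Subring ℚ)
    {P G : Type*} [Group P] [Group G] (β : P →* G)
    (hsurj : Function.Surjective β) (hfg : Group.FG P) (hfp : FinitelyPresentedGroup G)
    (h2c : TwoConnected R β) :
    (∃ s : Finset P, ↑s ⊆ (β.ker : Set P) ∧ Subgroup.normalClosure ↑s = β.ker) ∧
      Subsingleton (Additive (commQuot β.ker) ⊗[ℤ] R) := by
  refine ⟨(isFinitelyNormallyGenerated_ker hsurj hfg hfp).exists_finset, ?_⟩
  obtain ⟨σ, hσ⟩ : ∃ σ : FreeGroup G →* P, β.comp σ = presHom G :=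
    ⟨FreeGroup.lift (Function.surjInv hsurj), by ext g; simp [presHom, Function.surjInv_eq hsurj]⟩
  have hexact : Function.MulExact (connectingHom β σ hσ) (commQuotToAbelianization β.ker) :=
    MonoidHom.mulExact_of_comp_eq_one_of_ker_le_range
      (commQuotToAbelianization_comp_connectingHom hσ)
      (ker_commQuotToAbelianization_le_range_connectingHom hσ)
  exact subsingleton_of_exact_of_surjective_of_injective h2c.2
    (MonoidHom.rTensor_toAdditive_comp_eq_zero R (connectingHom_comp_H2Zmap hσ))
    (hexact.rTensor R)
    (MonoidHom.rTensor_toAdditive_comp_eq_zero R abelianizationMap_comp_commQuotToAbelianization)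
    h2c.1.1
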